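/- For all integers ℓ ≥ 1 and k ≥ 1, the total number of proper 3-colorings of the graph T(u,v,k,ℓ) is less than 2^(2^(k+ℓ) + 4·3^ℓ). -/

import Mathlib

/-- The base relation for the graph `P(u,v,b)`: vertices are `Sum.inl 0 = u`,
`Sum.inl 1 = v`, and `Sum.inr i = v_{i+1}` (0-indexed path vertices).
Edges: consecutive path vertices, `u` to odd-numbered path vertices `v₁, v₃, …`
(even 0-based index), and `v` to even-numbered ones `v₂, v₄, …`. -/
def PAdj (b : ℕ) : (Fin 2 ⊕ Fin b) → (Fin 2 ⊕ Fin b) → Prop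
  | Sum.inr i, Sum.inr j => (j : ℕ) = (i : ℕ) + 1
  | Sum.inl x, Sum.inr i => (x : ℕ) = (i : ℕ) % 2
  | _, _ => False

/-- The graph `P(u,v,b)`. -/
def Pgraph (b : ℕ) : SimpleGraph (Fin 2 ⊕ Fin b) := SimpleGraph.fromRel (PAdj b)

/-- The set of proper 3-colorings of a graph `G`. -/
def properColorings {V : Type*} (G : SimpleGraph V) : Set (V → Fin 3) :=
  {ψ | ∀ a b, G.Adj a b → ψ a ≠ ψ b}

/-- The type of "inner" vertices of `T(u,v,k,ℓ)` (all vertices except the two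
special vertices `u, v`). At level `0` these are the `2^k` path vertices of
`P(u,v,2^k)`; at level `ℓ+1` they are the five path vertices `v₁,…,v₅` of the
base copy of `P(u,v,5)` together with the inner vertices of the three glued
copies of `T(·,·,k,ℓ)`. -/
def TInner (k : ℕ) : ℕ → Type
  | 0 => Fin (2 ^ k)
  | ℓ + 1 => Fin 5 ⊕ (Fin 3 × TInner k ℓ)

/-- The vertex type of `T(u,v,k,ℓ)`: the special vertices `u = Sum.inl 0`,
`v = Sum.inl 1` together with the inner vertices. -/
abbrev TVert (k ℓ : ℕ) : Type := Fin 2 ⊕ TInner k ℓ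

/-- The pair of path vertices of `P(u,v,5)` onto which the `c`-th copy of
`T(·,·,k,ℓ-1)` is glued: `(v₁,v₃)` for `c = 0`, `(v₂,v₄)` for `c = 1`,
`(v₃,v₅)` for `c = 2` (0-indexed). -/
def gluePair (c : Fin 3) : Fin 5 × Fin 5 :=
  (⟨c.val, by omega⟩, ⟨c.val + 2, by have := c.isLt; omega⟩)

/-- The embedding of the `c`-th copy of `T(·,·,k,ℓ)` into `T(u,v,k,ℓ+1)`:
its special vertices are identified with the glue pair, and its inner vertices
are tagged with `c`. -/
def embedT (k ℓ : ℕ) (c : Fin 3) : TVert k ℓ → TVert k (ℓ + 1)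
  | Sum.inl x => if x = 0 then Sum.inr (Sum.inl (gluePair c).1)
                 else Sum.inr (Sum.inl (gluePair c).2)
  | Sum.inr w => Sum.inr (Sum.inr (c, w))

/-- The embedding of the base copy of `P(u,v,5)` into `T(u,v,k,ℓ+1)`. -/
def embedP (k ℓ : ℕ) : (Fin 2 ⊕ Fin 5) → TVert k (ℓ + 1)
  | Sum.inl x => Sum.inl x
  | Sum.inr y => Sum.inr (Sum.inl y)

/-- The graph `T(u,v,k,ℓ)`, defined recursively: `T(u,v,k,0) = P(u,v,2^k)`, and
`T(u,v,k,ℓ+1)` is obtained from `P(u,v,5)` by gluing three copies of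
`T(·,·,k,ℓ)` onto the pairs `(v₁,v₃)`, `(v₂,v₄)`, `(v₃,v₅)`. -/
def TGraph (k : ℕ) : (ℓ : ℕ) → SimpleGraph (TVert k ℓ)
  | 0 => Pgraph (2 ^ k)
  | ℓ + 1 => SimpleGraph.fromRel (fun a b =>
      (∃ x y, (Pgraph 5).Adj x y ∧ a = embedP k ℓ x ∧ b = embedP k ℓ y) ∨
      (∃ c x y, (TGraph k ℓ).Adj x y ∧ a = embedT k ℓ c x ∧ b = embedT k ℓ c y))

/-!
Write `N_ℓ(a, b)` (`numExtensions k ℓ a b`) for the number of proper colorings of the inner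
vertices of `T(u,v,k,ℓ)` extending `u ↦ a`, `v ↦ b`. On the path `P(u,v,n)` each path vertex
avoids the color of its neighbour among `u, v`, so there are at most `2^n` extensions, and at
most two when `a = b` (the path then alternates between the two other colors). At level `ℓ + 1`
an extension is a coloring `χ` of `P(u,v,5)` together with extensions on the three glued
copies, whose boundary colors are `(χ v₁, χ v₃)`, `(χ v₂, χ v₄)`, `(χ v₃, χ v₅)`. If `a = b`
all three pairs are monochromatic, and in any case at least one is. Hence `S_{ℓ+1} ≤ 2 S_ℓ³`
and `D_{ℓ+1} ≤ 32 S_ℓ D_ℓ²` for `S_ℓ = max N_ℓ(a, a)` and `D_ℓ = max N_ℓ(a, b)`, which gives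
`S_ℓ ≤ 2^(2·3^ℓ - 1)` and `D_ℓ ≤ 2^(2^(k+ℓ) + 3·3^ℓ - 3)`; summing over the nine boundary
colorings proves the bound.
-/

open Function

def glue {I : Type*} (a b : Fin 3) (φ : I → Fin 3) : Fin 2 ⊕ I → Fin 3 :=
  Sum.elim ![a, b] φ

lemma glue_restrict {I : Type*} (ψ : Fin 2 ⊕ I → Fin 3) :
    glue (ψ (.inl 0)) (ψ (.inl 1)) (ψ ∘ Sum.inr) = ψ := by
  funext z
  rcases z with x | _
  · fin_cases x <;> rfl
  · rfl

lemma comp_mem_properColorings {V W : Type*} {G : SimpleGraph V} {H : SimpleGraph W}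
    (f : G →g H) {ψ : W → Fin 3} (hψ : ψ ∈ properColorings H) :
    ψ ∘ f ∈ properColorings G :=
  fun _ _ h => hψ _ _ (f.map_adj h)

lemma Nat.card_le_mul_of_injective_sigma {α ι : Type*} {β : ι → Type*} [Finite ι]
    [∀ i, Finite (β i)] {f : α → Σ i, β i} (hf : Injective f) {M : ℕ}
    (hM : ∀ i, Nat.card (β i) ≤ M) : Nat.card α ≤ Nat.card ι * M := by
  have := Fintype.ofFinite ι
  calc Nat.card α ≤ Nat.card (Σ i, β i) := Nat.card_le_card_of_injective f hf
    _ = ∑ i, Nat.card (β i) := Nat.card_sigma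
    _ ≤ Finset.univ.card * M := Finset.sum_le_card_nsmul _ _ M fun i _ => hM i
    _ = Nat.card ι * M := by rw [Finset.card_univ, Nat.card_eq_fintype_card]

lemma Nat.card_forall_ne_fin_three {ι : Type*} [Fintype ι] (f : ι → Fin 3) :
    Nat.card {χ : ι → Fin 3 // ∀ i, χ i ≠ f i} = 2 ^ Fintype.card ι := by
  rw [Nat.card_congr (Equiv.subtypePiEquivPi (p := fun i x => x ≠ f i)), Nat.card_pi]
  simp

lemma fin_three_eq_of_ne {a b x y : Fin 3} (hab : a ≠ b) (hxa : x ≠ a) (hxb : x ≠ b)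
    (hya : y ≠ a) (hyb : y ≠ b) : x = y := by
  revert a b x y; decide

namespace Pgraph

variable {b : ℕ}

lemma adj_inr {i j : Fin b} (h : (j : ℕ) = i + 1) : (Pgraph b).Adj (.inr i) (.inr j) := by
  refine (SimpleGraph.fromRel_adj _ _ _).2 ⟨fun he => ?_, Or.inl h⟩
  have := Fin.ext_iff.1 (Sum.inr_injective he)
  omega

lemma adj_inl {x : Fin 2} {i : Fin b} (h : (x : ℕ) = i % 2) :
    (Pgraph b).Adj (.inl x) (.inr i) :=
  (SimpleGraph.fromRel_adj _ _ _).2 ⟨Sum.inl_ne_inr, Or.inl h⟩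

section

variable {a a' : Fin 3} {χ : Fin b → Fin 3} (hχ : glue a a' χ ∈ properColorings (Pgraph b))
include hχ

lemma ne_of_succ {i j : Fin b} (h : (j : ℕ) = i + 1) : χ i ≠ χ j :=
  hχ _ _ (adj_inr h)

lemma ne_boundary (i : Fin b) : χ i ≠ if (i : ℕ) % 2 = 0 then a else a' := by
  rcases Nat.mod_two_eq_zero_or_one i with h | h
  · simpa [glue, h, eq_comm] using hχ _ _ (adj_inl (x := 0) (i := i) (by simp [h]))
  · simpa [glue, h, eq_comm] using hχ _ _ (adj_inl (x := 1) (i := i) (by simp [h]))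

end

lemma card_colorings_le (a a' : Fin 3) :
    Nat.card {χ : Fin b → Fin 3 // glue a a' χ ∈ properColorings (Pgraph b)} ≤ 2 ^ b := by
  let f := Subtype.impEmbedding
    (fun χ : Fin b → Fin 3 => glue a a' χ ∈ properColorings (Pgraph b)) _ fun _ => ne_boundary
  calc _ ≤ _ := Nat.card_le_card_of_injective f f.injective
    _ = 2 ^ b := by rw [Nat.card_forall_ne_fin_three, Fintype.card_fin]

variable {a : Fin 3} {χ χ' : Fin b → Fin 3}

lemma ne_boundary_self (hχ : glue a a χ ∈ properColorings (Pgraph b)) (i : Fin b) :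
    χ i ≠ a := by
  simpa using ne_boundary hχ i

lemma eq_of_add_two (hχ : glue a a χ ∈ properColorings (Pgraph b)) {i j : Fin b}
    (h : (j : ℕ) = i + 2) : χ i = χ j :=
  let m : Fin b := ⟨i + 1, by omega⟩
  fin_three_eq_of_ne (ne_boundary_self hχ m).symm (ne_boundary_self hχ i)
    (ne_of_succ hχ (j := m) rfl) (ne_boundary_self hχ j) (ne_of_succ hχ (i := m) h).symm

lemma eq_of_apply_zero_eq (hχ : glue a a χ ∈ properColorings (Pgraph b))
    (hχ' : glue a a χ' ∈ properColorings (Pgraph b)) (hb : 0 < b)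
    (h₀ : χ ⟨0, hb⟩ = χ' ⟨0, hb⟩) : χ = χ' := by
  suffices ∀ n (hn : n < b), χ ⟨n, hn⟩ = χ' ⟨n, hn⟩ from funext fun i => this i i.isLt
  intro n
  induction n with
  | zero => exact fun _ => h₀
  | succ n ih =>
    intro hn
    have hprev := ih (by omega)
    have hne' : χ' ⟨n + 1, hn⟩ ≠ χ ⟨n, by omega⟩ := hprev ▸ (ne_of_succ hχ' rfl).symm
    exact fin_three_eq_of_ne (ne_boundary_self hχ _).symm (ne_boundary_self hχ _)
      (ne_of_succ hχ rfl).symm (ne_boundary_self hχ' _) hne'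

lemma card_colorings_self_le (hb : 0 < b) (a : Fin 3) :
    Nat.card {χ : Fin b → Fin 3 // glue a a χ ∈ properColorings (Pgraph b)} ≤ 2 := by
  let f (χ : {χ : Fin b → Fin 3 // glue a a χ ∈ properColorings (Pgraph b)}) :
      {x : Fin 3 // x ≠ a} := ⟨χ.1 ⟨0, hb⟩, ne_boundary_self χ.2 _⟩
  have hf : Injective f := fun χ χ' h =>
    Subtype.ext (eq_of_apply_zero_eq χ.2 χ'.2 hb (congrArg Subtype.val h))
  calc _ ≤ _ := Nat.card_le_card_of_injective f hf
    _ = 2 := by simp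

lemma exists_gluePair_eq {a a' : Fin 3} {χ : Fin 5 → Fin 3}
    (hχ : glue a a' χ ∈ properColorings (Pgraph 5)) :
    ∃ c, χ (gluePair c).1 = χ (gluePair c).2 := by
  by_cases h02 : χ 0 = χ 2
  · exact ⟨0, h02⟩
  by_cases h24 : χ 2 = χ 4
  · exact ⟨2, h24⟩
  have hu (i : Fin 5) (hi : (i : ℕ) % 2 = 0) : χ i ≠ a := by simpa [hi] using ne_boundary hχ i
  have h1 : χ 1 = a := fin_three_eq_of_ne h02 (ne_of_succ hχ rfl).symm (ne_of_succ hχ rfl)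
    (hu 0 rfl).symm (hu 2 rfl).symm
  have h3 : χ 3 = a := fin_three_eq_of_ne h24 (ne_of_succ hχ rfl).symm (ne_of_succ hχ rfl)
    (hu 2 rfl).symm (hu 4 rfl).symm
  exact ⟨1, h1.trans h3.symm⟩

end Pgraph

instance TInner.finite (k : ℕ) : ∀ ℓ, Finite (TInner k ℓ)
  | 0 => inferInstanceAs (Finite (Fin _))
  | ℓ + 1 =>
    have := TInner.finite k ℓ
    inferInstanceAs (Finite (Fin 5 ⊕ (Fin 3 × TInner k ℓ)))

section Embeddings

variable (k ℓ : ℕ)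

lemma embedP_injective : Injective (embedP k ℓ) := by
  rintro (x | x) (y | y) h <;> cases h <;> rfl

lemma embedT_injective (c : Fin 3) : Injective (embedT k ℓ c) := by
  rintro (x | x) (y | y) h <;> (try fin_cases x) <;> (try fin_cases y) <;>
    first
    | rfl
    | (cases h <;> rfl)
    | (injection h with h; injection h with h; simp [gluePair] at h)

def embedPHom : Pgraph 5 →g TGraph k (ℓ + 1) where
  toFun := embedP k ℓ
  map_rel' h := (SimpleGraph.fromRel_adj _ _ _).2
    ⟨(embedP_injective k ℓ).ne h.ne, .inl (.inl ⟨_, _, h, rfl, rfl⟩)⟩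

def embedTHom (c : Fin 3) : TGraph k ℓ →g TGraph k (ℓ + 1) where
  toFun := embedT k ℓ c
  map_rel' h := (SimpleGraph.fromRel_adj _ _ _).2
    ⟨(embedT_injective k ℓ c).ne h.ne, .inl (.inr ⟨c, _, _, h, rfl, rfl⟩)⟩

variable {k ℓ} (a b : Fin 3) (φ : TInner k (ℓ + 1) → Fin 3)

lemma glue_comp_embedPHom : glue a b φ ∘ embedPHom k ℓ = glue a b (φ ∘ Sum.inl) := by
  funext z; rcases z with x | y
  · fin_cases x <;> rfl
  · rfl

lemma glue_comp_embedTHom (c : Fin 3) :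
    glue a b φ ∘ embedTHom k ℓ c =
      glue (φ (.inl (gluePair c).1)) (φ (.inl (gluePair c).2)) (fun w => φ (.inr (c, w))) := by
  funext z; rcases z with x | w
  · fin_cases x <;> rfl
  · rfl

end Embeddings

noncomputable def numExtensions (k ℓ : ℕ) (a b : Fin 3) : ℕ :=
  Nat.card {φ : TInner k ℓ → Fin 3 // glue a b φ ∈ properColorings (TGraph k ℓ)}

lemma numExtensions_zero_le (k : ℕ) (a b : Fin 3) : numExtensions k 0 a b ≤ 2 ^ 2 ^ k :=
  Pgraph.card_colorings_le a b

lemma numExtensions_zero_self_le (k : ℕ) (a : Fin 3) : numExtensions k 0 a a ≤ 2 :=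
  Pgraph.card_colorings_self_le (Nat.two_pow_pos k) a

lemma numExtensions_succ_le {k ℓ : ℕ} {a b : Fin 3} {M : ℕ}
    (hM : ∀ χ : Fin 5 → Fin 3, glue a b χ ∈ properColorings (Pgraph 5) →
      ∏ c, numExtensions k ℓ (χ (gluePair c).1) (χ (gluePair c).2) ≤ M) :
    numExtensions k (ℓ + 1) a b ≤
      Nat.card {χ : Fin 5 → Fin 3 // glue a b χ ∈ properColorings (Pgraph 5)} * M := by
  let restrict (φ : {φ : TInner k (ℓ + 1) → Fin 3 //
      glue a b φ ∈ properColorings (TGraph k (ℓ + 1))}) :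
      Σ χ : {χ : Fin 5 → Fin 3 // glue a b χ ∈ properColorings (Pgraph 5)},
        ∀ c, {ψ : TInner k ℓ → Fin 3 //
          glue (χ.1 (gluePair c).1) (χ.1 (gluePair c).2) ψ ∈ properColorings (TGraph k ℓ)} :=
    ⟨⟨φ.1 ∘ Sum.inl, glue_comp_embedPHom a b φ.1 ▸ comp_mem_properColorings _ φ.2⟩,
      fun c => ⟨fun w => φ.1 (.inr (c, w)),
        glue_comp_embedTHom a b φ.1 c ▸ comp_mem_properColorings _ φ.2⟩⟩
  have hrestrict : Injective restrict := by
    intro φ φ' h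
    apply Subtype.ext
    funext z
    rcases z with y | ⟨c, w⟩
    · exact congrFun (congrArg (fun s => s.1.1) h) y
    · exact congrArg (fun s => (s.2 c).1 w) h
  refine Nat.card_le_mul_of_injective_sigma hrestrict fun χ => ?_
  rw [Nat.card_pi]
  exact hM χ.1 χ.2

lemma numExtensions_succ_self_le {k ℓ : ℕ} {s : ℕ} (hs : ∀ a, numExtensions k ℓ a a ≤ s)
    (a : Fin 3) : numExtensions k (ℓ + 1) a a ≤ 2 * s ^ 3 := by
  refine (numExtensions_succ_le fun χ hχ => ?_).trans
    (Nat.mul_le_mul_right _ (Pgraph.card_colorings_self_le (by norm_num) a))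
  calc ∏ c, numExtensions k ℓ (χ (gluePair c).1) (χ (gluePair c).2)
      ≤ s ^ (Finset.univ : Finset (Fin 3)).card :=
        Finset.prod_le_pow_card _ _ _ fun c _ =>
          Pgraph.eq_of_add_two hχ (i := (gluePair c).1) (j := (gluePair c).2) rfl ▸ hs _
    _ = s ^ 3 := rfl

lemma numExtensions_succ_le_of_le {k ℓ : ℕ} {s d : ℕ} (hs : ∀ a, numExtensions k ℓ a a ≤ s)
    (hd : ∀ a b, numExtensions k ℓ a b ≤ d) (a b : Fin 3) :
    numExtensions k (ℓ + 1) a b ≤ 32 * (s * d ^ 2) := by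
  refine (numExtensions_succ_le fun χ hχ => ?_).trans
    (Nat.mul_le_mul_right _ (Pgraph.card_colorings_le a b))
  obtain ⟨c₀, hc₀⟩ := Pgraph.exists_gluePair_eq hχ
  classical
  rw [← Finset.mul_prod_erase _ _ (Finset.mem_univ c₀)]
  refine Nat.mul_le_mul (hc₀ ▸ hs _) ?_
  calc _ ≤ d ^ (Finset.univ.erase c₀).card := Finset.prod_le_pow_card _ _ _ fun c _ => hd _ _
    _ = d ^ 2 := by rw [Finset.card_erase_of_mem (Finset.mem_univ _)]; rfl

lemma numExtensions_le (k : ℕ) : ∀ ℓ,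
    (∀ a, numExtensions k ℓ a a ≤ 2 ^ (2 * 3 ^ ℓ - 1)) ∧
      ∀ a b, numExtensions k ℓ a b ≤ 2 ^ (2 ^ (k + ℓ) + 3 * 3 ^ ℓ - 3)
  | 0 => ⟨numExtensions_zero_self_le k, by simpa using numExtensions_zero_le k⟩
  | ℓ + 1 => by
    obtain ⟨hs, hd⟩ := numExtensions_le k ℓ
    have h3 : 1 ≤ 3 ^ ℓ := Nat.one_le_pow _ _ (by norm_num)
    refine ⟨fun a => ?_, fun a b => ?_⟩
    · calc numExtensions k (ℓ + 1) a a ≤ 2 * (2 ^ (2 * 3 ^ ℓ - 1)) ^ 3 :=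
            numExtensions_succ_self_le hs a
        _ = 2 ^ (3 * (2 * 3 ^ ℓ - 1) + 1) := by ring
        _ ≤ 2 ^ (2 * 3 ^ (ℓ + 1) - 1) :=
          Nat.pow_le_pow_right two_pos (by rw [pow_succ]; omega)
    · calc numExtensions k (ℓ + 1) a b
          ≤ 32 * (2 ^ (2 * 3 ^ ℓ - 1) * (2 ^ (2 ^ (k + ℓ) + 3 * 3 ^ ℓ - 3)) ^ 2) :=
            numExtensions_succ_le_of_le hs hd a b
        _ = 2 ^ (5 + (2 * 3 ^ ℓ - 1) + 2 * (2 ^ (k + ℓ) + 3 * 3 ^ ℓ - 3)) := by ring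
        _ ≤ 2 ^ (2 ^ (k + (ℓ + 1)) + 3 * 3 ^ (ℓ + 1) - 3) :=
          Nat.pow_le_pow_right two_pos (by rw [← add_assoc, pow_succ, pow_succ]; omega)

lemma card_properColorings_le {I : Type*} [Finite I] (G : SimpleGraph (Fin 2 ⊕ I)) {M : ℕ}
    (hM : ∀ a b, Nat.card {φ : I → Fin 3 // glue a b φ ∈ properColorings G} ≤ M) :
    Nat.card {ψ : Fin 2 ⊕ I → Fin 3 // ψ ∈ properColorings G} ≤ 9 * M := by
  let split (ψ : {ψ : Fin 2 ⊕ I → Fin 3 // ψ ∈ properColorings G}) :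
      Σ p : Fin 3 × Fin 3, {φ : I → Fin 3 // glue p.1 p.2 φ ∈ properColorings G} :=
    ⟨(ψ.1 (.inl 0), ψ.1 (.inl 1)), ψ.1 ∘ Sum.inr, (glue_restrict ψ.1).symm ▸ ψ.2⟩
  have hsplit : Injective split := fun ψ ψ' h => Subtype.ext <|
    (glue_restrict ψ.1).symm.trans <|
      (congrArg (fun s => glue s.1.1 s.1.2 s.2.1) h).trans (glue_restrict ψ'.1)
  simpa using Nat.card_le_mul_of_injective_sigma hsplit fun p => hM p.1 p.2

theorem stmt11_general (k ℓ : ℕ) :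
    Nat.card {ψ : TVert k ℓ → Fin 3 // ψ ∈ properColorings (TGraph k ℓ)} <
      2 ^ (2 ^ (k + ℓ) + 4 * 3 ^ ℓ) :=
  calc _ ≤ 9 * 2 ^ (2 ^ (k + ℓ) + 3 * 3 ^ ℓ - 3) :=
        card_properColorings_le _ (numExtensions_le k ℓ).2
    _ < 2 ^ 4 * 2 ^ (2 ^ (k + ℓ) + 3 * 3 ^ ℓ - 3) := by gcongr; norm_num
    _ ≤ 2 ^ (2 ^ (k + ℓ) + 4 * 3 ^ ℓ) := by
      rw [← pow_add]
      have := Nat.one_le_pow ℓ 3 (by norm_num)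
      have := Nat.one_le_two_pow (n := k + ℓ)
      exact Nat.pow_le_pow_right two_pos (by omega)

/-- For all `ℓ ≥ 1` and `k ≥ 1`, the total number of proper 3-colorings of
`T(u,v,k,ℓ)` is less than `2^(2^(k+ℓ) + 4·3^ℓ)`. -/
theorem stmt11 (k ℓ : ℕ) (hk : 1 ≤ k) (hℓ : 1 ≤ ℓ) :
    Nat.card {ψ : TVert k ℓ → Fin 3 // ψ ∈ properColorings (TGraph k ℓ)} <
      2 ^ (2 ^ (k + ℓ) + 4 * 3 ^ ℓ) :=
  stmt11_general k ℓ
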